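/- arXiv:2206.11949 — 2 statements merged into one kernel-verified Lean document; each statement's English description precedes it below -/
import Mathlib

section
/- Let p be a prime, let R be a Noetherian commutative ring of characteristic p, and let (f_α)_{α∈A} be elements of R that generate the unit ideal. Let I be an ideal of R and z ∈ R. Then z lies in the tight closure I^* if and only if for each α ∈ A, the image z/1 of z in R_{f_α} lies in the tight closure (I·R_{f_α})^*. -/
/-- `offMinimal S` is `S°`, the set of elements of `S` lying outside every minimal prime. -/
def offMinimal (S : Type*) [CommRing S] : Set S :=
  {c : S | ∀ P ∈ minimalPrimes S, c ∉ P}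

/-- The bracket power `J^[q]`, generated by `q`-th powers of elements of `J`. -/
def bracketPow {S : Type*} [CommRing S] (J : Ideal S) (q : ℕ) : Ideal S :=
  Ideal.span ((fun a => a ^ q) '' (J : Set S))

/-- The tight closure `J^*` of an ideal `J` in a ring of characteristic `p`. -/
def tightClosure (p : ℕ) {S : Type*} [CommRing S] (J : Ideal S) : Set S :=
  {z : S | ∃ c ∈ offMinimal S, ∃ e₀ : ℕ, ∀ e : ℕ, e₀ ≤ e →
    c * z ^ p ^ e ∈ bracketPow J (p ^ e)}

/-!
Extending to any localization `S = M⁻¹R` preserves tight closure: minimal primes of `S` contract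
to minimal primes of `R`, and bracket powers commute with extension. Conversely, a test element
of `R_f` has the form `x/fⁿ`, and adding to `x` a suitable element of `ker (R → R_f)` puts it in
`R°`: the minimal primes not containing `f` contain that kernel, the others do not, so prime
avoidance applies. This yields `c_α ∈ R°` with `f_α^m c_α z^q ∈ I^[q]`; the product of
the `c_α` over a finite generating subfamily is a single test element, because the `f_α^m`
generate the unit ideal.
-/

theorem pow_mem_bracketPow {S : Type*} [CommRing S] {J : Ideal S} {a : S} (ha : a ∈ J) (q : ℕ) :
    a ^ q ∈ bracketPow J q :=
  Ideal.subset_span ⟨a, ha, rfl⟩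

theorem map_bracketPow_le {R S : Type*} [CommRing R] [CommRing S] (φ : R →+* S) (I : Ideal R)
    (q : ℕ) : (bracketPow I q).map φ ≤ bracketPow (I.map φ) q := by
  rw [bracketPow, Ideal.map_span, Ideal.span_le]
  rintro _ ⟨_, ⟨a, ha, rfl⟩, rfl⟩
  rw [map_pow]
  exact pow_mem_bracketPow (Ideal.mem_map_of_mem φ ha) q

section OffMinimal

variable {R : Type*} [CommRing R]

theorem mul_mem_offMinimal {a b : R} (ha : a ∈ offMinimal R) (hb : b ∈ offMinimal R) :
    a * b ∈ offMinimal R :=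
  fun P hP hab => (hP.1.1.mem_or_mem hab).elim (ha P hP) (hb P hP)

theorem mem_offMinimal_of_isUnit {u : R} (hu : IsUnit u) : u ∈ offMinimal R :=
  fun P hP huP => hP.1.1.ne_top (Ideal.eq_top_of_isUnit_mem P huP hu)

theorem prod_mem_offMinimal {ι : Type*} {t : Finset ι} {c : ι → R}
    (hc : ∀ i ∈ t, c i ∈ offMinimal R) : ∏ i ∈ t, c i ∈ offMinimal R :=
  Finset.prod_induction c (· ∈ offMinimal R) (fun _ _ => mul_mem_offMinimal)
    (mem_offMinimal_of_isUnit isUnit_one) hc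

theorem exists_notMem_mul_pow_eq_zero_of_mem_minimalPrimes {P : Ideal R}
    (hP : P ∈ minimalPrimes R) {a : R} (ha : a ∈ P) :
    ∃ s ∉ P, ∃ n : ℕ, s * a ^ n = 0 := by
  have : P.IsPrime := hP.1.1
  have hnil : IsNilpotent (algebraMap R (Localization.AtPrime P) a) := by
    have := Ring.KrullDimLE.of_isLocalization P hP (Localization.AtPrime P)
    rw [Ring.KrullDimLE.isNilpotent_iff_mem_maximalIdeal]
    exact (IsLocalization.AtPrime.to_map_mem_maximal_iff _ P a).2 ha
  obtain ⟨n, hn⟩ := hnil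
  rw [← map_pow, IsLocalization.map_eq_zero_iff P.primeCompl] at hn
  obtain ⟨s, hs⟩ := hn
  exact ⟨s, s.2, n, hs⟩

theorem exists_mem_forall_notMem_of_forall_not_le {s : Set (Ideal R)} (hfin : s.Finite)
    (hprime : ∀ P ∈ s, P.IsPrime) {J : Ideal R} (hJ : ∀ P ∈ s, ¬J ≤ P) :
    ∃ t ∈ J, ∀ P ∈ s, t ∉ P := by
  by_contra! h
  obtain ⟨P, hP, hJP⟩ := (Ideal.subset_union_prime_finite hfin (f := fun P => P) ⊥ ⊥
    fun P hP _ _ => hprime P hP).1 fun t ht =>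
      let ⟨_, hP, htP⟩ := h t ht; Set.mem_biUnion hP htP
  exact hJ P hP hJP

theorem exists_add_notMem_of_forall_not_le {s : Set (Ideal R)} (hfin : s.Finite)
    (hprime : ∀ P ∈ s, P.IsPrime) (hinc : s.Pairwise fun P Q => ¬P ≤ Q) {K : Ideal R}
    (hK : ∀ P ∈ s, ¬K ≤ P) (x : R) : ∃ t ∈ K, ∀ P ∈ s, x + t ∉ P := by
  classical
  -- `J ≤ K` lies in the primes of `s` avoiding `x`, and by incomparability in none containing `x`
  set J := K * ∏ Q ∈ hfin.toFinset.filter (x ∉ ·), Q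
  have hJ_le : ∀ Q ∈ s, x ∉ Q → J ≤ Q := fun Q hQ hxQ =>
    Ideal.mul_le_right.trans <| Ideal.prod_le_inf.trans <|
      Finset.inf_le (Finset.mem_filter.2 ⟨hfin.mem_toFinset.2 hQ, hxQ⟩)
  have hJ_not_le : ∀ P ∈ {P ∈ s | x ∈ P}, ¬J ≤ P := by
    rintro P ⟨hP, hxP⟩ hJP
    rcases (Ideal.IsPrime.mul_le (hprime P hP)).1 hJP with hKP | hprod
    · exact hK P hP hKP
    · obtain ⟨Q, hQ, hQP⟩ := (hprime P hP).prod_le.1 hprod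
      obtain ⟨hQ, hxQ⟩ := Finset.mem_filter.1 hQ
      exact hinc (hfin.mem_toFinset.1 hQ) hP (fun h => hxQ (h ▸ hxP)) hQP
  obtain ⟨t, htJ, ht⟩ := exists_mem_forall_notMem_of_forall_not_le (hfin.subset fun _ h => h.1)
    (fun P hP => hprime P hP.1) hJ_not_le
  refine ⟨t, Ideal.mul_le_left htJ, fun P hP hxtP => ?_⟩
  by_cases hxP : x ∈ P
  · exact ht P ⟨hP, hxP⟩ ((Ideal.add_mem_iff_right P hxP).1 hxtP)
  · exact hxP ((Ideal.add_mem_iff_left P (hJ_le P hP hxP htJ)).1 hxtP)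

end OffMinimal

section Localization

variable {R S : Type*} [CommRing R] [CommRing S] [Algebra R S] (M : Submonoid R)

theorem map_bracketPow_of_isLocalization [IsLocalization M S] (I : Ideal R) (q : ℕ) :
    (bracketPow I q).map (algebraMap R S) = bracketPow (I.map (algebraMap R S)) q := by
  refine le_antisymm (map_bracketPow_le _ I q) (Ideal.span_le.2 ?_)
  rintro _ ⟨y, hy, rfl⟩
  obtain ⟨⟨a, s⟩, hys⟩ := (IsLocalization.mem_map_algebraMap_iff M S).1 hy
  have hunit : IsUnit (algebraMap R S s ^ q) := (IsLocalization.map_units S s).pow q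
  refine (Ideal.mul_unit_mem_iff_mem _ hunit).1 ?_
  rw [← mul_pow, hys, ← map_pow]
  exact Ideal.mem_map_of_mem _ (pow_mem_bracketPow a.2 q)

theorem under_mem_minimalPrimes_iff [IsLocalization M S] {Q : Ideal S} :
    Q.under R ∈ minimalPrimes R ↔ Q ∈ minimalPrimes S := by
  have h := IsLocalization.minimalPrimes_map M S (⊥ : Ideal R)
  rw [Ideal.map_bot] at h
  exact (Set.ext_iff.1 h Q).symm

theorem algebraMap_mem_offMinimal [IsLocalization M S] {c : R} (hc : c ∈ offMinimal R) :
    algebraMap R S c ∈ offMinimal S :=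
  fun _ hQ hcQ => hc _ ((under_mem_minimalPrimes_iff M).2 hQ) hcQ

theorem notMem_of_algebraMap_mem_offMinimal [IsLocalization M S] {x : R}
    (hx : algebraMap R S x ∈ offMinimal S) {P : Ideal R} (hP : P ∈ minimalPrimes R)
    (hMP : Disjoint (M : Set R) P) : x ∉ P := by
  have hunder := IsLocalization.under_map_of_isPrime_disjoint M S hP.1.1 hMP
  refine fun hxP => hx _ ((under_mem_minimalPrimes_iff M).1 ?_) (Ideal.mem_map_of_mem _ hxP)
  rwa [hunder]

theorem ker_algebraMap_le_of_disjoint [IsLocalization M S] {P : Ideal R} (hP : P.IsPrime)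
    (hMP : Disjoint (M : Set R) P) : RingHom.ker (algebraMap R S) ≤ P := by
  rw [← IsLocalization.under_map_of_isPrime_disjoint M S hP hMP, RingHom.ker_eq_comap_bot]
  exact Ideal.comap_mono bot_le

theorem not_ker_algebraMap_le_of_not_disjoint [IsLocalization M S] {P : Ideal R}
    (hP : P ∈ minimalPrimes R) (hMP : ¬Disjoint (M : Set R) P) :
    ¬RingHom.ker (algebraMap R S) ≤ P := by
  obtain ⟨a, haM, haP⟩ := Set.not_disjoint_iff.1 hMP
  obtain ⟨s, hsP, n, hs⟩ := exists_notMem_mul_pow_eq_zero_of_mem_minimalPrimes hP haP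
  refine fun hle => hsP (hle ?_)
  rw [RingHom.mem_ker, IsLocalization.map_eq_zero_iff M]
  exact ⟨⟨a ^ n, pow_mem haM n⟩, by rw [mul_comm]; exact hs⟩

theorem exists_mem_offMinimal_algebraMap_eq [IsLocalization M S] [IsNoetherianRing R] {x : R}
    (hx : algebraMap R S x ∈ offMinimal S) :
    ∃ c ∈ offMinimal R, algebraMap R S c = algebraMap R S x := by
  set s := {P ∈ minimalPrimes R | ¬Disjoint (M : Set R) P}
  have hinc : s.Pairwise fun P Q => ¬P ≤ Q := fun P hP Q hQ hne hle =>
    hne (le_antisymm hle (hQ.1.2 hP.1.1 hle))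
  obtain ⟨t, htK, ht⟩ := exists_add_notMem_of_forall_not_le
    ((minimalPrimes.finite_of_isNoetherianRing R).subset fun _ hP => hP.1)
    (fun P hP => hP.1.1.1) hinc
    (fun P hP => not_ker_algebraMap_le_of_not_disjoint M (S := S) hP.1 hP.2) x
  refine ⟨x + t, fun P hP hxtP => ?_, by rw [map_add, RingHom.mem_ker.1 htK, add_zero]⟩
  by_cases hMP : Disjoint (M : Set R) P
  · have htP := ker_algebraMap_le_of_disjoint M (S := S) hP.1.1 hMP htK
    exact notMem_of_algebraMap_mem_offMinimal M hx hP hMP ((Ideal.add_mem_iff_left P htP).1 hxtP)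
  · exact ht P ⟨hP, hMP⟩ hxtP

theorem algebraMap_mem_tightClosure_map [IsLocalization M S] {p : ℕ} {I : Ideal R} {z : R}
    (hz : z ∈ tightClosure p I) :
    algebraMap R S z ∈ tightClosure p (I.map (algebraMap R S)) := by
  obtain ⟨c, hc, e₀, hrel⟩ := hz
  refine ⟨algebraMap R S c, algebraMap_mem_offMinimal M hc, e₀, fun e he => ?_⟩
  rw [← map_pow, ← map_mul, ← map_bracketPow_of_isLocalization M]
  exact Ideal.mem_map_of_mem _ (hrel e he)

theorem exists_mem_offMinimal_mul_mem_bracketPow [IsLocalization M S] [IsNoetherianRing R]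
    {p : ℕ} {I : Ideal R} {z : R}
    (hz : algebraMap R S z ∈ tightClosure p (I.map (algebraMap R S))) :
    ∃ c ∈ offMinimal R, ∃ e₀ : ℕ, ∀ e : ℕ, e₀ ≤ e →
      ∃ m ∈ M, m * (c * z ^ p ^ e) ∈ bracketPow I (p ^ e) := by
  obtain ⟨c', hc', e₀, hrel⟩ := hz
  obtain ⟨⟨x, s⟩, hxs⟩ := IsLocalization.surj M c'
  have hx : algebraMap R S x ∈ offMinimal S :=
    hxs ▸ mul_mem_offMinimal hc' (mem_offMinimal_of_isUnit (IsLocalization.map_units S s))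
  obtain ⟨c, hc, hcx⟩ := exists_mem_offMinimal_algebraMap_eq M hx
  refine ⟨c, hc, e₀, fun e he =>
    (IsLocalization.algebraMap_mem_map_algebraMap_iff M S _ _).1 ?_⟩
  rw [map_bracketPow_of_isLocalization M, map_mul, map_pow, hcx, ← hxs, mul_right_comm]
  exact Ideal.mul_mem_right _ _ (hrel e he)

end Localization

theorem mem_tightClosure_of_span_eq_top {R : Type*} [CommRing R] {p : ℕ} {I : Ideal R} {z : R}
    {s : Set R} (hs : Ideal.span s = ⊤)
    (hloc : ∀ r ∈ s, ∃ c ∈ offMinimal R, ∃ e₀ : ℕ, ∀ e : ℕ, e₀ ≤ e →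
      ∃ m : ℕ, r ^ m * (c * z ^ p ^ e) ∈ bracketPow I (p ^ e)) :
    z ∈ tightClosure p I := by
  classical
  obtain ⟨t, hts, ht⟩ := (Ideal.span_eq_top_iff_finite s).1 hs
  choose! c hc e₀ hrel using hloc
  refine ⟨∏ r ∈ t, c r, prod_mem_offMinimal fun r hr => hc r (hts hr), t.sup e₀,
    fun e he => Submodule.mem_of_span_eq_top_of_smul_pow_mem _ _ ht _ fun ⟨r, hr⟩ => ?_⟩
  obtain ⟨m, hm⟩ := hrel r (hts hr) e ((Finset.le_sup hr).trans he)
  refine ⟨m, ?_⟩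
  have hsplit : r ^ m • ((∏ r ∈ t, c r) * z ^ p ^ e) =
      (∏ r ∈ t.erase r, c r) * (r ^ m * (c r * z ^ p ^ e)) := by
    rw [smul_eq_mul, ← Finset.mul_prod_erase t c hr]
    ring
  rw [hsplit]
  exact Ideal.mul_mem_left _ _ hm

theorem mem_tightClosure_iff_forall_localization_general (p : ℕ)
    {R : Type*} [CommRing R] [IsNoetherianRing R]
    {A : Type*} (f : A → R) (hf : Ideal.span (Set.range f) = ⊤)
    (I : Ideal R) (z : R) :
    z ∈ tightClosure p I ↔
      ∀ α : A, algebraMap R (Localization.Away (f α)) z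
        ∈ tightClosure p (I.map (algebraMap R (Localization.Away (f α)))) := by
  refine ⟨fun hz α => algebraMap_mem_tightClosure_map (Submonoid.powers (f α)) hz,
    fun h => mem_tightClosure_of_span_eq_top hf ?_⟩
  rintro _ ⟨α, rfl⟩
  obtain ⟨c, hc, e₀, hrel⟩ :=
    exists_mem_offMinimal_mul_mem_bracketPow (Submonoid.powers (f α)) (h α)
  refine ⟨c, hc, e₀, fun e he => ?_⟩
  obtain ⟨_, ⟨m, rfl⟩, hm⟩ := hrel e he
  exact ⟨m, hm⟩

/-- if `(f_α)` generate the unit ideal, then `z ∈ I^*` iff `z/1 ∈ (I R_{f_α})^*`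
for all `α`. -/
theorem mem_tightClosure_iff_forall_localization (p : ℕ) (hp : p.Prime)
    {R : Type*} [CommRing R] [IsNoetherianRing R] [CharP R p]
    {A : Type*} (f : A → R) (hf : Ideal.span (Set.range f) = ⊤)
    (I : Ideal R) (z : R) :
    z ∈ tightClosure p I ↔
      ∀ α : A, algebraMap R (Localization.Away (f α)) z
        ∈ tightClosure p (I.map (algebraMap R (Localization.Away (f α)))) :=
  mem_tightClosure_iff_forall_localization_general p f hf I z
end

section
/- Let p be a prime and let R be a Noetherian commutative ring of characteristic p, with X = Spec R its prime spectrum as a scheme. Then the following are equivalent: (i) for every affine open subset U of X, every ideal of the ring of sections O_X(U) is tightly closed (with respect to the prime p); (ii) for every f ∈ R, every ideal of the localization R_f is tightly closed, i.e., R_f is weakly F-regular. -/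
/-- A ring `S` is weakly F-regular (with respect to `p`) if every ideal is tightly closed. -/
def WeaklyFRegular (p : ℕ) (S : Type*) [CommRing S] : Prop :=
  ∀ J : Ideal S, tightClosure p J = (J : Set S)

/-- A ring `S` is semi F-regular (with respect to `p`) if for every `f ∈ S` the localization
`S_f` is weakly F-regular. -/
def SemiFRegular (p : ℕ) (S : Type*) [CommRing S] : Prop :=
  ∀ f : S, WeaklyFRegular p (Localization.Away f)

section TightClosure

variable {p : ℕ} {S S' : Type*} [CommRing S] [CommRing S']

theorem subset_tightClosure (J : Ideal S) : (J : Set S) ⊆ tightClosure p J :=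
  fun z hz => ⟨1, fun _ hP => hP.isPrime.one_notMem, 0, fun _ _ => by
    rw [one_mul]
    exact Ideal.subset_span ⟨z, hz, rfl⟩⟩

theorem map_bracketPow_le_s14 (g : S →+* S') (J : Ideal S) (q : ℕ) :
    (bracketPow J q).map g ≤ bracketPow (J.map g) q := by
  rw [bracketPow, Ideal.map_span]
  apply Ideal.span_mono
  rintro _ ⟨_, ⟨a, ha, rfl⟩, rfl⟩
  rw [map_pow]
  exact Set.mem_image_of_mem _ (Ideal.mem_map_of_mem g ha)

theorem map_mem_tightClosure {g : S →+* S'}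
    (hg : ∀ P ∈ minimalPrimes S', P.comap g ∈ minimalPrimes S) {J : Ideal S} {z : S}
    (hz : z ∈ tightClosure p J) : g z ∈ tightClosure p (J.map g) := by
  obtain ⟨c, hc, e₀, he⟩ := hz
  refine ⟨g c, fun P hP hcP => hc _ (hg P hP) hcP, e₀, fun e he₀ => ?_⟩
  rw [← map_pow, ← map_mul]
  exact map_bracketPow_le_s14 g J _ (Ideal.mem_map_of_mem g (he e he₀))

theorem RingEquiv.comap_mem_minimalPrimes (e : S ≃+* S') {P : Ideal S'}
    (hP : P ∈ minimalPrimes S') : P.comap (e : S →+* S') ∈ minimalPrimes S := by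
  have := Ideal.minimalPrimes_comap_of_surjective (f := (e : S →+* S')) (I := ⊥) e.surjective hP
  rwa [Ideal.comap_bot_of_injective (e : S →+* S') e.injective] at this

theorem IsLocalization.comap_mem_minimalPrimes (M : Submonoid S) [Algebra S S']
    [IsLocalization M S'] {P : Ideal S'} (hP : P ∈ minimalPrimes S') :
    P.comap (algebraMap S S') ∈ minimalPrimes S := by
  have := IsLocalization.minimalPrimes_map M S' (⊥ : Ideal S)
  rw [Ideal.map_bot] at this
  exact this.le hP

end TightClosure

namespace WeaklyFRegular

variable {p : ℕ} {S S' : Type*} [CommRing S] [CommRing S']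

theorem of_ringEquiv (e : S ≃+* S') (h : WeaklyFRegular p S) : WeaklyFRegular p S' := by
  intro J
  refine Set.Subset.antisymm (fun z hz => ?_) (subset_tightClosure J)
  have := map_mem_tightClosure (g := (e.symm : S' →+* S))
    (fun P hP => e.symm.comap_mem_minimalPrimes hP) hz
  rw [h, SetLike.mem_coe, Ideal.map_comap_of_equiv, Ideal.mem_comap] at this
  simpa using this

theorem of_isLocalization_away {R P : Type*} [CommRing R] [CommRing P] (j : R ≃+* P) {r : R}
    {r' : P} (hr : j r = r') (A B : Type*) [CommRing A] [CommRing B] [Algebra R A] [Algebra P B]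
    [IsLocalization.Away r A] [IsLocalization.Away r' B] (h : WeaklyFRegular p A) :
    WeaklyFRegular p B :=
  h.of_ringEquiv <| IsLocalization.ringEquivOfRingEquiv (M := .powers r) (T := .powers r') A B j
    (hr ▸ Submonoid.map_powers j.toMonoidHom r)

theorem of_span_eq_top (s : Set S) (hs : Ideal.span s = ⊤) (T : s → Type*)
    [∀ r, CommRing (T r)] [∀ r, Algebra S (T r)] [∀ r : s, IsLocalization.Away r.1 (T r)]
    (h : ∀ r, WeaklyFRegular p (T r)) : WeaklyFRegular p S := by
  intro J
  refine Set.Subset.antisymm (fun z hz => ?_) (subset_tightClosure J)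
  refine Submodule.mem_of_isLocalized_span s hs T (fun r => Algebra.linearMap S (T r))
    fun r => ?_
  rw [Ideal.localized₀_eq_restrictScalars_map (T r) (.powers r.1)]
  have hzr := map_mem_tightClosure (fun P hP => IsLocalization.comap_mem_minimalPrimes
    (S' := T r) (.powers r.1) hP) hz
  rwa [h r] at hzr

end WeaklyFRegular

open AlgebraicGeometry

theorem AlgebraicGeometry.IsAffineOpen.weaklyFRegular_of_forall_mem {p : ℕ} {X : Scheme}
    {U : X.Opens} (hU : IsAffineOpen U)
    (h : ∀ x ∈ U, ∃ f : Γ(X, U), x ∈ X.basicOpen f ∧ WeaklyFRegular p Γ(X, X.basicOpen f)) :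
    WeaklyFRegular p Γ(X, U) := by
  let s : Set Γ(X, U) := {f | WeaklyFRegular p Γ(X, X.basicOpen f)}
  have hs : Ideal.span s = ⊤ := by
    rw [← hU.iSup_basicOpen_eq_self_iff]
    refine le_antisymm (iSup_le fun f => X.basicOpen_le f.1) fun x hx => ?_
    obtain ⟨f, hxf, hf⟩ := h x hx
    exact TopologicalSpace.Opens.mem_iSup.mpr ⟨⟨f, hf⟩, hxf⟩
  have := fun f : s => hU.isLocalization_basicOpen f.1
  exact WeaklyFRegular.of_span_eq_top s hs (fun f => Γ(X, X.basicOpen f.1)) fun f => f.2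

theorem affineOpens_weaklyFRegular_iff_semiFRegular_general (p : ℕ)
    (R : Type u) [CommRing R] :
    (∀ U : (Spec (CommRingCat.of R)).Opens, IsAffineOpen U →
      WeaklyFRegular p Γ(Spec (CommRingCat.of R), U)) ↔
    (∀ f : R, WeaklyFRegular p (Localization.Away f)) := by
  let j := (Scheme.ΓSpecIso (CommRingCat.of R)).commRingCatIsoToRingEquiv
  constructor
  · intro h f
    exact (h _ ((isAffineOpen_top _).basicOpen (j.symm f))).of_isLocalization_away j
      (j.apply_symm_apply f) _ _
  · intro h U hU
    refine hU.weaklyFRegular_of_forall_mem fun x hx => ?_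
    obtain ⟨f, g, hfg, hxf⟩ :=
      exists_basicOpen_le_affine_inter hU (isAffineOpen_top _) x ⟨hx, trivial⟩
    refine ⟨f, hxf, ?_⟩
    rw [hfg]
    exact (h (j g)).of_isLocalization_away j.symm (j.symm_apply_apply g) _ _

/-- for `X = Spec R` with `R` Noetherian of characteristic `p`, every ideal of
every ring of sections over an affine open is tightly closed iff `R_f` is weakly F-regular
for every `f ∈ R` (i.e. `R` is semi F-regular). -/
theorem affineOpens_weaklyFRegular_iff_semiFRegular (p : ℕ) (hp : p.Prime)
    (R : Type u) [CommRing R] [IsNoetherianRing R] [CharP R p] :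
    (∀ U : (Spec (CommRingCat.of R)).Opens, IsAffineOpen U →
      WeaklyFRegular p Γ(Spec (CommRingCat.of R), U)) ↔
    (∀ f : R, WeaklyFRegular p (Localization.Away f)) :=
  affineOpens_weaklyFRegular_iff_semiFRegular_general p R
end
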